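/- For all formulas α1, α2, β of the background language L, the disjunction-elimination symbol is provably well-defined in GG: ⊢_GG Π ξ^{α1∨α2} Π f^β_1 Π f^β_2 ( ((ξ^{α1∨α2} : α1∨α2 × Π ξ^{α1}(ξ^{α1} : α1 ⊃ f^β_1(ξ^{α1}) : β)) × Π ξ^{α2}(ξ^{α2} : α2 ⊃ f^β_2(ξ^{α2}) : β)) ⊃ ∨E ξ^{α1} ξ^{α2}(ξ^{α1∨α2}, f^β_1(ξ^{α1}), f^β_2(ξ^{α2})) : β ). -/
import Mathlib


/-!  A formalization of d'Aragona's systems of grounding (Prawitz's theory of grounds).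

* `LTerm`, `LFormula` : terms and formulas of the first-order background language `L`
  (with an absurdity constant `bot`).
* `GTerm` : typed terms of the (enriched, possibly expanded) Gentzen language of grounding:
  individual constants `konst i` naming closed atomic derivations, typed ground-variables
  `xi α i` (ξ^α_i), applied functional variables `fh α x i t` (h^α_{x,i}(t)) and
  `ff α i T` (f^α_i(T)), the primitive operational symbols `andI, orI, impI, allI, exI`,
  the non-primitive ones `andE, orE, impE, allE, exE, botE`, and (for expansions by further
  non-primitive operational symbols) `op i` together with application `app`.
* `GForm` : formulas of the enriched language: `gr T α` ("T : α", i.e. Gr(T,α)),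
  `equiv T U` ("T ≡ U"), `botG` (⊥^G) and the logical constants ×, +, ⊃, Π, 𝔈
  (`conj, disj, impl, pi, exi`), quantifying over `GVar`s (individual, typed, functional).
* `Valid base R Γ t` : the tree `t` is a correct derivation, from open assumptions in `Γ`,
  in the system of grounding determined by the atomic base (represented by the conclusion
  assignment `base : ℕ → LFormula` for the constants `konst i`) and by the set `R` of
  characteristic rules (rewrite equations for the additional non-primitive symbols).
  With `R = ∅` this is exactly the system GG of d'Aragona.
* `Deriv base R Γ A` : derivability in the system; `Deriv base ∅ Γ A` is `Γ ⊢_GG A`.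
-/

namespace Grounding

noncomputable section
open Classical

/-! ### The background language L -/

/-- Terms of the first-order background language. -/
inductive LTerm : Type
  | var : ℕ → LTerm
  | func : ℕ → List LTerm → LTerm

/-- `x` occurs (free) in the background term `t`. -/
inductive LTerm.FVar : ℕ → LTerm → Prop
  | var (x : ℕ) : LTerm.FVar x (.var x)
  | func {x f : ℕ} {args : List LTerm} {t : LTerm} :
      t ∈ args → LTerm.FVar x t → LTerm.FVar x (.func f args)

/-- The set of variables of a background term. -/
def LTerm.fv (t : LTerm) : Set ℕ := {x | LTerm.FVar x t}

/-- Substitution `t[u/x]` in background terms. -/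
def LTerm.subst : LTerm → ℕ → LTerm → LTerm
  | .var y, x, u => if y = x then u else .var y
  | .func f args, x, u => .func f (args.attach.map fun a => a.1.subst x u)
termination_by t _ _ => sizeOf t
decreasing_by
  have := List.sizeOf_lt_of_mem a.2
  simp only [LTerm.func.sizeOf_spec]
  omega

/-- Formulas of the first-order background language, with absurdity constant `bot`. -/
inductive LFormula : Type
  | atom : ℕ → List LTerm → LFormula
  | bot : LFormula
  | and : LFormula → LFormula → LFormula
  | or : LFormula → LFormula → LFormula
  | imp : LFormula → LFormula → LFormula
  | all : ℕ → LFormula → LFormula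
  | ex : ℕ → LFormula → LFormula

/-- Free variables of a background formula. -/
def LFormula.fv : LFormula → Set ℕ
  | .atom _ args => {x | ∃ t ∈ args, x ∈ t.fv}
  | .bot => ∅
  | .and a b => a.fv ∪ b.fv
  | .or a b => a.fv ∪ b.fv
  | .imp a b => a.fv ∪ b.fv
  | .all y a => a.fv \ {y}
  | .ex y a => a.fv \ {y}

/-- Substitution `α[t/x]` in background formulas (no capture-renaming; use `freeFor`). -/
def LFormula.subst : LFormula → ℕ → LTerm → LFormula
  | .atom r args, x, t => .atom r (args.map fun u => u.subst x t)
  | .bot, _, _ => .bot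
  | .and a b, x, t => .and (a.subst x t) (b.subst x t)
  | .or a b, x, t => .or (a.subst x t) (b.subst x t)
  | .imp a b, x, t => .imp (a.subst x t) (b.subst x t)
  | .all y a, x, t => if y = x then .all y a else .all y (a.subst x t)
  | .ex y a, x, t => if y = x then .ex y a else .ex y (a.subst x t)

/-- `t` is free for `x` in `α`. -/
def LTerm.freeFor (t : LTerm) (x : ℕ) : LFormula → Prop
  | .atom _ _ => True
  | .bot => True
  | .and a b => t.freeFor x a ∧ t.freeFor x b
  | .or a b => t.freeFor x a ∧ t.freeFor x b
  | .imp a b => t.freeFor x a ∧ t.freeFor x b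
  | .all y a => (x = y ∨ x ∉ a.fv) ∨ (y ∉ t.fv ∧ t.freeFor x a)
  | .ex y a => (x = y ∨ x ∉ a.fv) ∨ (y ∉ t.fv ∧ t.freeFor x a)

/-- The standard logical-complexity measure `k¹` of a background formula. -/
def LFormula.compl : LFormula → ℕ
  | .atom _ _ => 0
  | .bot => 0
  | .and a b => max a.compl b.compl + 1
  | .or a b => max a.compl b.compl + 1
  | .imp a b => max a.compl b.compl + 1
  | .all _ a => a.compl + 1
  | .ex _ a => a.compl + 1

/-! ### Terms of the (enriched, possibly expanded) language of grounding -/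

/-- Typed terms of the language of grounding. -/
inductive GTerm : Type
  | konst : ℕ → GTerm                                -- δ_i, naming closed atomic derivations
  | xi : LFormula → ℕ → GTerm                        -- typed ground-variables ξ^α_i
  | fh : LFormula → ℕ → ℕ → LTerm → GTerm            -- applied functional variables h^α_{x,i}(t)
  | ff : LFormula → ℕ → GTerm → GTerm                -- applied functional variables f^α_i(T)
  | op : ℕ → GTerm                                   -- additional non-primitive operational symbols
  | app : GTerm → GTerm → GTerm                      -- application (for the additional symbols)
  | andI : GTerm → GTerm → GTerm                     -- ∧I(T,U)
  | orI : Bool → LFormula → GTerm → GTerm            -- ∨I[α_i ▷ α₁∨α₂]; `true` = left injection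
  | impI : LFormula → ℕ → GTerm → GTerm              -- →I ξ^α_i (T), binding ξ^α_i
  | allI : ℕ → GTerm → GTerm                         -- ∀I x (T), binding x
  | exI : ℕ → LTerm → LFormula → GTerm → GTerm       -- ∃I[α(t/x) ▷ ∃x α](T)
  | andE : Bool → GTerm → GTerm                      -- ∧E,i(T), `true` = first projection
  | orE : LFormula → LFormula → ℕ → ℕ → GTerm → GTerm → GTerm → GTerm
      -- ∨E ξ^α_i ξ^β_j (T,U,Z), binding ξ^α_i in U and ξ^β_j in Z
  | impE : GTerm → GTerm → GTerm                     -- →E(T,U)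
  | allE : LTerm → GTerm → GTerm                     -- ∀E[∀xα ▷ α(t/x)](T)
  | exE : ℕ → LFormula → ℕ → GTerm → GTerm → GTerm   -- ∃E x ξ^{α}_j (T,U), binding x, ξ^α_j in U
  | botE : LFormula → GTerm → GTerm                  -- ⊥_α(T)

/-- Variables of the enriched language: individual, typed and functional. -/
inductive GVar : Type
  | ind : ℕ → GVar
  | xi : LFormula → ℕ → GVar
  | fh : LFormula → ℕ → ℕ → GVar
  | ff : LFormula → ℕ → GVar

/-- Free variables (of all three kinds) of a grounding term. -/
def GTerm.fvar : GTerm → Set GVar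
  | .konst _ => ∅
  | .xi γ j => {GVar.xi γ j} ∪ (GVar.ind '' γ.fv)
  | .fh γ y j t => {GVar.fh γ y j} ∪ (GVar.ind '' (t.fv ∪ (γ.fv \ {y})))
  | .ff γ j T => {GVar.ff γ j} ∪ (GVar.ind '' γ.fv) ∪ T.fvar
  | .op _ => ∅
  | .app T U => T.fvar ∪ U.fvar
  | .andI T U => T.fvar ∪ U.fvar
  | .orI _ γ T => (GVar.ind '' γ.fv) ∪ T.fvar
  | .impI γ j T => (GVar.ind '' γ.fv) ∪ (T.fvar \ {GVar.xi γ j})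
  | .allI y T => T.fvar \ {GVar.ind y}
  | .exI y t γ T => (GVar.ind '' (t.fv ∪ (γ.fv \ {y}))) ∪ T.fvar
  | .andE _ T => T.fvar
  | .orE γ δ i j T V W => T.fvar ∪ (V.fvar \ {GVar.xi γ i}) ∪ (W.fvar \ {GVar.xi δ j})
  | .impE T U => T.fvar ∪ U.fvar
  | .allE t T => (GVar.ind '' t.fv) ∪ T.fvar
  | .exE y γ j T U => T.fvar ∪ ((U.fvar \ {GVar.xi γ j}) \ {GVar.ind y})
  | .botE γ T => (GVar.ind '' γ.fv) ∪ T.fvar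

/-- `v` is a functional variable. -/
def GVar.isFun : GVar → Prop
  | .fh _ _ _ => True
  | .ff _ _ => True
  | _ => False

/-- The term contains no (free or applied) functional variables. -/
def GTerm.noFunVar (T : GTerm) : Prop := ∀ v ∈ T.fvar, ¬ v.isFun

/-- `T` is a term of the basic (non-enriched) language of grounding `Gen`
(no functional variables, no additional operational symbols). -/
def GTerm.isGen : GTerm → Prop
  | .konst _ => True
  | .xi _ _ => True
  | .fh _ _ _ _ => False
  | .ff _ _ _ => False
  | .op _ => False
  | .app _ _ => False
  | .andI T U => T.isGen ∧ U.isGen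
  | .orI _ _ T => T.isGen
  | .impI _ _ T => T.isGen
  | .allI _ T => T.isGen
  | .exI _ _ _ T => T.isGen
  | .andE _ T => T.isGen
  | .orE _ _ _ _ T U Z => T.isGen ∧ U.isGen ∧ Z.isGen
  | .impE T U => T.isGen ∧ U.isGen
  | .allE _ T => T.isGen
  | .exE _ _ _ T U => T.isGen ∧ U.isGen
  | .botE _ T => T.isGen

/-- Substitution of the individual variable `x` by the background term `u` in a grounding term. -/
def GTerm.substInd (x : ℕ) (u : LTerm) : GTerm → GTerm
  | .konst i => .konst i
  | .xi γ j => .xi (γ.subst x u) j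
  | .fh γ y j t => .fh (if y = x then γ else γ.subst x u) y j (t.subst x u)
  | .ff γ j T => .ff (γ.subst x u) j (T.substInd x u)
  | .op i => .op i
  | .app T U => .app (T.substInd x u) (U.substInd x u)
  | .andI T U => .andI (T.substInd x u) (U.substInd x u)
  | .orI b γ T => .orI b (γ.subst x u) (T.substInd x u)
  | .impI γ j T => .impI (γ.subst x u) j (T.substInd x u)
  | .allI y T => if y = x then .allI y T else .allI y (T.substInd x u)
  | .exI y t γ T => .exI y (t.subst x u) (if y = x then γ else γ.subst x u) (T.substInd x u)
  | .andE b T => .andE b (T.substInd x u)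
  | .orE γ δ i j T V W =>
      .orE (γ.subst x u) (δ.subst x u) i j (T.substInd x u) (V.substInd x u) (W.substInd x u)
  | .impE T U => .impE (T.substInd x u) (U.substInd x u)
  | .allE t T => .allE (t.subst x u) (T.substInd x u)
  | .exE y γ j T U =>
      .exE y (if y = x then γ else γ.subst x u) j (T.substInd x u)
        (if y = x then U else U.substInd x u)
  | .botE γ T => .botE (γ.subst x u) (T.substInd x u)

/-- Substitution of the typed variable ξ^α_i by the term `W` in a grounding term. -/
def GTerm.substXi : GTerm → LFormula → ℕ → GTerm → GTerm
  | .konst k, _, _, _ => .konst k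
  | .xi γ j, α, i, W => if γ = α ∧ j = i then W else .xi γ j
  | .fh γ y j t, _, _, _ => .fh γ y j t
  | .ff γ j T, α, i, W => .ff γ j (T.substXi α i W)
  | .op k, _, _, _ => .op k
  | .app T U, α, i, W => .app (T.substXi α i W) (U.substXi α i W)
  | .andI T U, α, i, W => .andI (T.substXi α i W) (U.substXi α i W)
  | .orI b γ T, α, i, W => .orI b γ (T.substXi α i W)
  | .impI γ j T, α, i, W => if γ = α ∧ j = i then .impI γ j T else .impI γ j (T.substXi α i W)
  | .allI y T, α, i, W => .allI y (T.substXi α i W)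
  | .exI y t γ T, α, i, W => .exI y t γ (T.substXi α i W)
  | .andE b T, α, i, W => .andE b (T.substXi α i W)
  | .orE γ δ k l T V Z, α, i, W =>
      .orE γ δ k l (T.substXi α i W)
        (if γ = α ∧ k = i then V else V.substXi α i W)
        (if δ = α ∧ l = i then Z else Z.substXi α i W)
  | .impE T U, α, i, W => .impE (T.substXi α i W) (U.substXi α i W)
  | .allE t T, α, i, W => .allE t (T.substXi α i W)
  | .exE y γ j T U, α, i, W =>
      .exE y γ j (T.substXi α i W) (if γ = α ∧ j = i then U else U.substXi α i W)
  | .botE γ T, α, i, W => .botE γ (T.substXi α i W)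

/-- Substitution of the functional variable h^β_{x,m} by the term `U`
(occurrences `h^β_{x,m}(t)` become `U[t/x]`). -/
def GTerm.substFH : GTerm → LFormula → ℕ → ℕ → GTerm → GTerm
  | .konst i, _, _, _, _ => .konst i
  | .xi γ j, _, _, _, _ => .xi γ j
  | .fh γ y j t, β, x, m, U => if γ = β ∧ y = x ∧ j = m then U.substInd x t else .fh γ y j t
  | .ff γ j T, β, x, m, U => .ff γ j (T.substFH β x m U)
  | .op i, _, _, _, _ => .op i
  | .app T V, β, x, m, U => .app (T.substFH β x m U) (V.substFH β x m U)
  | .andI T V, β, x, m, U => .andI (T.substFH β x m U) (V.substFH β x m U)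
  | .orI b γ T, β, x, m, U => .orI b γ (T.substFH β x m U)
  | .impI γ j T, β, x, m, U => .impI γ j (T.substFH β x m U)
  | .allI y T, β, x, m, U => .allI y (T.substFH β x m U)
  | .exI y t γ T, β, x, m, U => .exI y t γ (T.substFH β x m U)
  | .andE b T, β, x, m, U => .andE b (T.substFH β x m U)
  | .orE γ δ k l T V Z, β, x, m, U =>
      .orE γ δ k l (T.substFH β x m U) (V.substFH β x m U) (Z.substFH β x m U)
  | .impE T V, β, x, m, U => .impE (T.substFH β x m U) (V.substFH β x m U)
  | .allE t T, β, x, m, U => .allE t (T.substFH β x m U)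
  | .exE y γ j T V, β, x, m, U => .exE y γ j (T.substFH β x m U) (V.substFH β x m U)
  | .botE γ T, β, x, m, U => .botE γ (T.substFH β x m U)

/-- Substitution of the functional variable f^β_m by the term `U`
(whole applications `f^β_m(Z)` become `U`). -/
def GTerm.substFF : GTerm → LFormula → ℕ → GTerm → GTerm
  | .konst i, _, _, _ => .konst i
  | .xi γ j, _, _, _ => .xi γ j
  | .fh γ y j t, _, _, _ => .fh γ y j t
  | .ff γ j T, β, m, U => if γ = β ∧ j = m then U else .ff γ j (T.substFF β m U)
  | .op i, _, _, _ => .op i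
  | .app T V, β, m, U => .app (T.substFF β m U) (V.substFF β m U)
  | .andI T V, β, m, U => .andI (T.substFF β m U) (V.substFF β m U)
  | .orI b γ T, β, m, U => .orI b γ (T.substFF β m U)
  | .impI γ j T, β, m, U => .impI γ j (T.substFF β m U)
  | .allI y T, β, m, U => .allI y (T.substFF β m U)
  | .exI y t γ T, β, m, U => .exI y t γ (T.substFF β m U)
  | .andE b T, β, m, U => .andE b (T.substFF β m U)
  | .orE γ δ k l T V Z, β, m, U =>
      .orE γ δ k l (T.substFF β m U) (V.substFF β m U) (Z.substFF β m U)
  | .impE T V, β, m, U => .impE (T.substFF β m U) (V.substFF β m U)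
  | .allE t T, β, m, U => .allE t (T.substFF β m U)
  | .exE y γ j T V, β, m, U => .exE y γ j (T.substFF β m U) (V.substFF β m U)
  | .botE γ T, β, m, U => .botE γ (T.substFF β m U)

/-! ### Formulas of the enriched language of grounding -/

/-- Formulas of the enriched language of grounding: `gr T α` is the atomic formula
`Gr(T, α)` (written `T : α`), `equiv T U` is `T ≡ U`, `botG` is ⊥^G, and
`conj, disj, impl, pi, exi` are ×, +, ⊃, Π, 𝔈. -/
inductive GForm : Type
  | gr : GTerm → LFormula → GForm
  | equiv : GTerm → GTerm → GForm
  | botG : GForm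
  | conj : GForm → GForm → GForm
  | disj : GForm → GForm → GForm
  | impl : GForm → GForm → GForm
  | pi : GVar → GForm → GForm
  | exi : GVar → GForm → GForm

/-- Bi-implication `A ⇔ B`, an abbreviation for `(A ⊃ B) × (B ⊃ A)`. -/
def gIff (A B : GForm) : GForm := .conj (.impl A B) (.impl B A)

/-- Negation `¬^G A`, an abbreviation for `A ⊃ ⊥^G`. -/
def gNeg (A : GForm) : GForm := .impl A .botG

/-- Free variables of a formula of the enriched language. -/
def GForm.fvar : GForm → Set GVar
  | .gr T α => T.fvar ∪ (GVar.ind '' α.fv)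
  | .equiv T U => T.fvar ∪ U.fvar
  | .botG => ∅
  | .conj A B => A.fvar ∪ B.fvar
  | .disj A B => A.fvar ∪ B.fvar
  | .impl A B => A.fvar ∪ B.fvar
  | .pi v A => A.fvar \ {v}
  | .exi v A => A.fvar \ {v}

/-- Substitution of `x` by `u` in the type annotations of a variable. -/
def GVar.substInd (x : ℕ) (u : LTerm) : GVar → GVar
  | .ind y => .ind y
  | .xi γ j => .xi (γ.subst x u) j
  | .fh γ y j => .fh (if y = x then γ else γ.subst x u) y j
  | .ff γ j => .ff (γ.subst x u) j

/-- Substitution of the individual variable `x` by `u` in a formula. -/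
def GForm.substInd (x : ℕ) (u : LTerm) : GForm → GForm
  | .gr T α => .gr (T.substInd x u) (α.subst x u)
  | .equiv T U => .equiv (T.substInd x u) (U.substInd x u)
  | .botG => .botG
  | .conj A B => .conj (A.substInd x u) (B.substInd x u)
  | .disj A B => .disj (A.substInd x u) (B.substInd x u)
  | .impl A B => .impl (A.substInd x u) (B.substInd x u)
  | .pi v A => if v = .ind x then .pi v A else .pi (v.substInd x u) (A.substInd x u)
  | .exi v A => if v = .ind x then .exi v A else .exi (v.substInd x u) (A.substInd x u)

/-- Substitution of the typed variable ξ^α_i by the term `W` in a formula. -/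
def GForm.substXi (α : LFormula) (i : ℕ) (W : GTerm) : GForm → GForm
  | .gr T γ => .gr (T.substXi α i W) γ
  | .equiv T U => .equiv (T.substXi α i W) (U.substXi α i W)
  | .botG => .botG
  | .conj A B => .conj (A.substXi α i W) (B.substXi α i W)
  | .disj A B => .disj (A.substXi α i W) (B.substXi α i W)
  | .impl A B => .impl (A.substXi α i W) (B.substXi α i W)
  | .pi v A => if v = .xi α i then .pi v A else .pi v (A.substXi α i W)
  | .exi v A => if v = .xi α i then .exi v A else .exi v (A.substXi α i W)

/-- Substitution of the functional variable h^β_{x,m} by the term `U` in a formula. -/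
def GForm.substFH (β : LFormula) (x m : ℕ) (U : GTerm) : GForm → GForm
  | .gr T γ => .gr (T.substFH β x m U) γ
  | .equiv T V => .equiv (T.substFH β x m U) (V.substFH β x m U)
  | .botG => .botG
  | .conj A B => .conj (A.substFH β x m U) (B.substFH β x m U)
  | .disj A B => .disj (A.substFH β x m U) (B.substFH β x m U)
  | .impl A B => .impl (A.substFH β x m U) (B.substFH β x m U)
  | .pi v A => if v = .fh β x m then .pi v A else .pi v (A.substFH β x m U)
  | .exi v A => if v = .fh β x m then .exi v A else .exi v (A.substFH β x m U)

/-- Substitution of the functional variable f^β_m by the term `U` in a formula. -/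
def GForm.substFF (β : LFormula) (m : ℕ) (U : GTerm) : GForm → GForm
  | .gr T γ => .gr (T.substFF β m U) γ
  | .equiv T V => .equiv (T.substFF β m U) (V.substFF β m U)
  | .botG => .botG
  | .conj A B => .conj (A.substFF β m U) (B.substFF β m U)
  | .disj A B => .disj (A.substFF β m U) (B.substFF β m U)
  | .impl A B => .impl (A.substFF β m U) (B.substFF β m U)
  | .pi v A => if v = .ff β m then .pi v A else .pi v (A.substFF β m U)
  | .exi v A => if v = .ff β m then .exi v A else .exi v (A.substFF β m U)

/-! ### Typing of grounding terms -/

/-- `HasType base T α` : the grounding term `T` is of type `α` (relative to the atomic base,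
represented by the assignment `base` of conclusions to the constants naming closed atomic
derivations). -/
inductive HasType (base : ℕ → LFormula) : GTerm → LFormula → Prop
  | konst (i : ℕ) : HasType base (.konst i) (base i)
  | xi (γ : LFormula) (j : ℕ) : HasType base (.xi γ j) γ
  | fh (γ : LFormula) (y j : ℕ) (t : LTerm) : HasType base (.fh γ y j t) (γ.subst y t)
  | ff {T : GTerm} {δ : LFormula} (γ : LFormula) (j : ℕ) :
      HasType base T δ → HasType base (.ff γ j T) γ
  | andI {T U α β} : HasType base T α → HasType base U β → HasType base (.andI T U) (α.and β)
  | orIL {T α} (β) : HasType base T α → HasType base (.orI true β T) (α.or β)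
  | orIR {T β} (α) : HasType base T β → HasType base (.orI false α T) (α.or β)
  | impI {T β} (α : LFormula) (j : ℕ) : HasType base T β → HasType base (.impI α j T) (α.imp β)
  | allI {T α} (x : ℕ) : HasType base T α →
      (∀ γ j, GVar.xi γ j ∈ T.fvar → x ∉ γ.fv) → HasType base (.allI x T) (.all x α)
  | exI {T} (x : ℕ) (t : LTerm) (α : LFormula) :
      HasType base T (α.subst x t) → t.freeFor x α → HasType base (.exI x t α T) (.ex x α)
  | andEL {T α β} : HasType base T (.and α β) → HasType base (.andE true T) α
  | andER {T α β} : HasType base T (.and α β) → HasType base (.andE false T) β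
  | orE {T U Z α β γ} (i j : ℕ) : HasType base T (.or α β) → HasType base U γ →
      HasType base Z γ → HasType base (.orE α β i j T U Z) γ
  | impE {T U α β} : HasType base T (.imp α β) → HasType base U α → HasType base (.impE T U) β
  | allE {T α} (x : ℕ) (t : LTerm) : HasType base T (.all x α) → t.freeFor x α →
      HasType base (.allE t T) (α.subst x t)
  | exE {T U α β} (x j : ℕ) : HasType base T (.ex x α) → HasType base U β →
      (∀ γ k, GVar.xi γ k ∈ U.fvar → γ ≠ α → x ∉ γ.fv) → HasType base (.exE x α j T U) β
  | botE {T} (α : LFormula) : HasType base T .bot → HasType base (.botE α T) α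

/-! ### Derivations -/

/-- Names of the rules of a system of grounding. -/
inductive RuleTag : Type
  | assum | constAx
  | andIntro | orIntroL | orIntroR | impIntro | allIntro | exIntro
  | dAnd | dOr | dImp | dAll | dEx | botT
  | eqRefl | eqSymm | eqTrans | eqPres
  | congAndI | congAndIInv1 | congAndIInv2 | congAndE
  | congOrI | congOrIInv | congOrE
  | congImpI | congImpIInv | congImpE
  | congAllI | congAllIInv | congAllE
  | congExI | congExIInv | congExE
  | congBotE | congApp
  | rAnd | rOr | rImp | rAll | rEx
  | charR
  | timesI | timesE1 | timesE2 | plusI1 | plusI2 | plusE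
  | supI | supE | piI | piE | frakEI | frakEE | botGE
deriving DecidableEq

/-- Derivation trees: each node carries its conclusion, the rule applied,
and the list of the subderivations of the premises (major premise first). -/
inductive PTree : Type
  | node : GForm → RuleTag → List PTree → PTree

/-- Conclusion of a derivation tree. -/
def PTree.concl : PTree → GForm
  | .node A _ _ => A

/-- The rule applied at the root. -/
def PTree.tag : PTree → RuleTag
  | .node _ r _ => r

/-- `Valid base R Γ t` : the tree `t` is a correct derivation from open assumptions in `Γ`
in the system of grounding over the atomic base represented by `base`, with set `R` of
characteristic rules (premises/conclusion pairs, used for the rewrite equations of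
additional non-primitive operational symbols).  With `R = ∅` this is the system `GG`. -/
inductive Valid (base : ℕ → LFormula) (R : Set (List GForm × GForm)) : Set GForm → PTree → Prop
  -- assumption rule
  | assum {Γ A} : A ∈ Γ → Valid base R Γ (.node A .assum [])
  -- axioms δ : α for the constants naming closed atomic derivations with conclusion α
  | constAx {Γ} (i : ℕ) : Valid base R Γ (.node (.gr (.konst i) (base i)) .constAx [])
  -- type introductions
  | andIntro {Γ t u T U α β} : Valid base R Γ t → Valid base R Γ u →
      t.concl = .gr T α → u.concl = .gr U β →
      Valid base R Γ (.node (.gr (.andI T U) (.and α β)) .andIntro [t, u])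
  | orIntroL {Γ t T α β} : Valid base R Γ t → t.concl = .gr T α →
      Valid base R Γ (.node (.gr (.orI true β T) (.or α β)) .orIntroL [t])
  | orIntroR {Γ t T α β} : Valid base R Γ t → t.concl = .gr T β →
      Valid base R Γ (.node (.gr (.orI false α T) (.or α β)) .orIntroR [t])
  | impIntro {Γ t T α β i} :
      Valid base R (insert (.gr (.xi α i) α) Γ) t → t.concl = .gr T β →
      (∀ B ∈ Γ, GVar.xi α i ∉ B.fvar) →
      Valid base R Γ (.node (.gr (.impI α i T) (.imp α β)) .impIntro [t])
  | allIntro {Γ t T α x} : Valid base R Γ t → t.concl = .gr T α →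
      (∀ B ∈ Γ, GVar.ind x ∉ B.fvar) →
      Valid base R Γ (.node (.gr (.allI x T) (.all x α)) .allIntro [t])
  | exIntro {Γ t T α x u} : Valid base R Γ t → t.concl = .gr T (α.subst x u) →
      u.freeFor x α →
      Valid base R Γ (.node (.gr (.exI x u α T) (.ex x α)) .exIntro [t])
  -- generalized type eliminations
  | dAnd {Γ t s T α β i j A} :
      Valid base R Γ t → t.concl = .gr T (.and α β) →
      Valid base R (insert (.equiv T (.andI (.xi α i) (.xi β j)))
          (insert (.gr (.xi α i) α) (insert (.gr (.xi β j) β) Γ))) s →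
      s.concl = A →
      (∀ B ∈ Γ, GVar.xi α i ∉ B.fvar ∧ GVar.xi β j ∉ B.fvar) →
      GVar.xi α i ∉ A.fvar → GVar.xi β j ∉ A.fvar →
      GVar.xi α i ∉ T.fvar → GVar.xi β j ∉ T.fvar →
      Valid base R Γ (.node A .dAnd [t, s])
  | dOr {Γ t s₁ s₂ T α β i j A} :
      Valid base R Γ t → t.concl = .gr T (.or α β) →
      Valid base R (insert (.equiv T (.orI true β (.xi α i))) (insert (.gr (.xi α i) α) Γ)) s₁ →
      Valid base R (insert (.equiv T (.orI false α (.xi β j))) (insert (.gr (.xi β j) β) Γ)) s₂ →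
      s₁.concl = A → s₂.concl = A →
      (∀ B ∈ Γ, GVar.xi α i ∉ B.fvar ∧ GVar.xi β j ∉ B.fvar) →
      GVar.xi α i ∉ A.fvar → GVar.xi β j ∉ A.fvar →
      GVar.xi α i ∉ T.fvar → GVar.xi β j ∉ T.fvar →
      Valid base R Γ (.node A .dOr [t, s₁, s₂])
  | dImp {Γ t s T α β k m A} :
      Valid base R Γ t → t.concl = .gr T (.imp α β) →
      Valid base R (insert (.equiv T (.impI α k (.ff β m (.xi α k))))
          (insert (.pi (.xi α k) (.impl (.gr (.xi α k) α) (.gr (.ff β m (.xi α k)) β))) Γ)) s →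
      s.concl = A →
      (∀ B ∈ Γ, GVar.ff β m ∉ B.fvar) → GVar.ff β m ∉ A.fvar → GVar.ff β m ∉ T.fvar →
      Valid base R Γ (.node A .dImp [t, s])
  | dAll {Γ t s T α x m A} :
      Valid base R Γ t → t.concl = .gr T (.all x α) →
      Valid base R (insert (.equiv T (.allI x (.fh α x m (.var x))))
          (insert (.pi (.ind x) (.gr (.fh α x m (.var x)) α)) Γ)) s →
      s.concl = A →
      (∀ B ∈ Γ, GVar.fh α x m ∉ B.fvar) → GVar.fh α x m ∉ A.fvar → GVar.fh α x m ∉ T.fvar →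
      Valid base R Γ (.node A .dAll [t, s])
  | dEx {Γ t s T α x j A} :
      Valid base R Γ t → t.concl = .gr T (.ex x α) →
      Valid base R (insert (.equiv T (.exI x (.var x) α (.xi α j)))
          (insert (.gr (.xi α j) α) Γ)) s →
      s.concl = A →
      (∀ B ∈ Γ, GVar.ind x ∉ B.fvar ∧ GVar.xi α j ∉ B.fvar) →
      GVar.ind x ∉ A.fvar → GVar.xi α j ∉ A.fvar → GVar.xi α j ∉ T.fvar →
      Valid base R Γ (.node A .dEx [t, s])
  -- the rule for the type ⊥
  | botT {Γ t T} : Valid base R Γ t → t.concl = .gr T .bot →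
      Valid base R Γ (.node .botG .botT [t])
  -- equivalence rules: reflexivity, symmetry, transitivity, preservation of denotation
  | eqRefl {Γ} (T : GTerm) : Valid base R Γ (.node (.equiv T T) .eqRefl [])
  | eqSymm {Γ t T U} : Valid base R Γ t → t.concl = .equiv T U →
      Valid base R Γ (.node (.equiv U T) .eqSymm [t])
  | eqTrans {Γ t s T U W} : Valid base R Γ t → Valid base R Γ s →
      t.concl = .equiv T U → s.concl = .equiv U W →
      Valid base R Γ (.node (.equiv T W) .eqTrans [t, s])
  | eqPres {Γ t s T U α} : Valid base R Γ t → Valid base R Γ s →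
      t.concl = .equiv T U → s.concl = .gr U α →
      Valid base R Γ (.node (.gr T α) .eqPres [t, s])
  -- congruence: operational symbols applied to equivalent terms yield equivalent terms
  | congAndI {Γ t s T U V W} : Valid base R Γ t → Valid base R Γ s →
      t.concl = .equiv T U → s.concl = .equiv V W →
      Valid base R Γ (.node (.equiv (.andI T V) (.andI U W)) .congAndI [t, s])
  | congAndIInv1 {Γ t T₁ T₂ U₁ U₂} : Valid base R Γ t →
      t.concl = .equiv (.andI T₁ T₂) (.andI U₁ U₂) →
      Valid base R Γ (.node (.equiv T₁ U₁) .congAndIInv1 [t])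
  | congAndIInv2 {Γ t T₁ T₂ U₁ U₂} : Valid base R Γ t →
      t.concl = .equiv (.andI T₁ T₂) (.andI U₁ U₂) →
      Valid base R Γ (.node (.equiv T₂ U₂) .congAndIInv2 [t])
  | congAndE {Γ t T U} (b : Bool) : Valid base R Γ t → t.concl = .equiv T U →
      Valid base R Γ (.node (.equiv (.andE b T) (.andE b U)) .congAndE [t])
  | congOrI {Γ t T U} (b : Bool) (γ : LFormula) : Valid base R Γ t → t.concl = .equiv T U →
      Valid base R Γ (.node (.equiv (.orI b γ T) (.orI b γ U)) .congOrI [t])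
  | congOrIInv {Γ t T U b γ} : Valid base R Γ t →
      t.concl = .equiv (.orI b γ T) (.orI b γ U) →
      Valid base R Γ (.node (.equiv T U) .congOrIInv [t])
  | congOrE {Γ t s₁ s₂ T U V₁ V₂ W₁ W₂} (α β : LFormula) (i j : ℕ) :
      Valid base R Γ t → Valid base R Γ s₁ → Valid base R Γ s₂ →
      t.concl = .equiv T U → s₁.concl = .equiv V₁ V₂ → s₂.concl = .equiv W₁ W₂ →
      Valid base R Γ
        (.node (.equiv (.orE α β i j T V₁ W₁) (.orE α β i j U V₂ W₂)) .congOrE [t, s₁, s₂])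
  | congImpI {Γ t T U} (α : LFormula) (i : ℕ) : Valid base R Γ t → t.concl = .equiv T U →
      Valid base R Γ (.node (.equiv (.impI α i T) (.impI α i U)) .congImpI [t])
  | congImpIInv {Γ t T U α i} : Valid base R Γ t →
      t.concl = .equiv (.impI α i T) (.impI α i U) →
      Valid base R Γ (.node (.equiv T U) .congImpIInv [t])
  | congImpE {Γ t s T₁ T₂ U₁ U₂} : Valid base R Γ t → Valid base R Γ s →
      t.concl = .equiv T₁ T₂ → s.concl = .equiv U₁ U₂ →
      Valid base R Γ (.node (.equiv (.impE T₁ U₁) (.impE T₂ U₂)) .congImpE [t, s])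
  | congAllI {Γ t T U} (x : ℕ) : Valid base R Γ t → t.concl = .equiv T U →
      Valid base R Γ (.node (.equiv (.allI x T) (.allI x U)) .congAllI [t])
  | congAllIInv {Γ t T U x} : Valid base R Γ t →
      t.concl = .equiv (.allI x T) (.allI x U) →
      Valid base R Γ (.node (.equiv T U) .congAllIInv [t])
  | congAllE {Γ t T U} (u : LTerm) : Valid base R Γ t → t.concl = .equiv T U →
      Valid base R Γ (.node (.equiv (.allE u T) (.allE u U)) .congAllE [t])
  | congExI {Γ t T U} (x : ℕ) (u : LTerm) (α : LFormula) :
      Valid base R Γ t → t.concl = .equiv T U →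
      Valid base R Γ (.node (.equiv (.exI x u α T) (.exI x u α U)) .congExI [t])
  | congExIInv {Γ t T U x u α} : Valid base R Γ t →
      t.concl = .equiv (.exI x u α T) (.exI x u α U) →
      Valid base R Γ (.node (.equiv T U) .congExIInv [t])
  | congExE {Γ t s T U V W} (x : ℕ) (α : LFormula) (j : ℕ) :
      Valid base R Γ t → Valid base R Γ s →
      t.concl = .equiv T U → s.concl = .equiv V W →
      Valid base R Γ (.node (.equiv (.exE x α j T V) (.exE x α j U W)) .congExE [t, s])
  | congBotE {Γ t T U} (α : LFormula) : Valid base R Γ t → t.concl = .equiv T U →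
      Valid base R Γ (.node (.equiv (.botE α T) (.botE α U)) .congBotE [t])
  | congApp {Γ t s T U V W} : Valid base R Γ t → Valid base R Γ s →
      t.concl = .equiv T U → s.concl = .equiv V W →
      Valid base R Γ (.node (.equiv (.app T V) (.app U W)) .congApp [t, s])
  -- rewrite equations for computing the non-canonical terms
  | rAnd {Γ} (b : Bool) (T U : GTerm) :
      Valid base R Γ (.node (.equiv (.andE b (.andI T U)) (cond b T U)) .rAnd [])
  | rOrL {Γ} (α β : LFormula) (i j : ℕ) (T U Z : GTerm) :
      Valid base R Γ
        (.node (.equiv (.orE α β i j (.orI true β T) U Z) (U.substXi α i T)) .rOr [])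
  | rOrR {Γ} (α β : LFormula) (i j : ℕ) (T U Z : GTerm) :
      Valid base R Γ
        (.node (.equiv (.orE α β i j (.orI false α T) U Z) (Z.substXi β j T)) .rOr [])
  | rImp {Γ} (α : LFormula) (k : ℕ) (T U : GTerm) :
      Valid base R Γ (.node (.equiv (.impE (.impI α k T) U) (T.substXi α k U)) .rImp [])
  | rAll {Γ} (x : ℕ) (u : LTerm) (T : GTerm) :
      Valid base R Γ (.node (.equiv (.allE u (.allI x T)) (T.substInd x u)) .rAll [])
  | rEx {Γ} (x : ℕ) (u : LTerm) (α : LFormula) (j : ℕ) (T U : GTerm) :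
      Valid base R Γ
        (.node (.equiv (.exE x α j (.exI x u α T) U)
          ((U.substInd x u).substXi (α.subst x u) j T)) .rEx [])
  -- characteristic rules of the system (for expansions of GG)
  | charRule {Γ prems concl} {ts : List PTree} :
      (prems, concl) ∈ R → ts.length = prems.length →
      (∀ (k : ℕ) (t : PTree) (P : GForm), ts[k]? = some t → prems[k]? = some P →
        Valid base R Γ t) →
      (∀ (k : ℕ) (t : PTree) (P : GForm), ts[k]? = some t → prems[k]? = some P →
        t.concl = P) →
      Valid base R Γ (.node concl .charR ts)
  -- intuitionistic logic: ×, +, ⊃, Π, 𝔈, ⊥^G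
  | timesI {Γ t s A B} : Valid base R Γ t → Valid base R Γ s → t.concl = A → s.concl = B →
      Valid base R Γ (.node (.conj A B) .timesI [t, s])
  | timesE1 {Γ t A B} : Valid base R Γ t → t.concl = .conj A B →
      Valid base R Γ (.node A .timesE1 [t])
  | timesE2 {Γ t A B} : Valid base R Γ t → t.concl = .conj A B →
      Valid base R Γ (.node B .timesE2 [t])
  | plusI1 {Γ t A} (B : GForm) : Valid base R Γ t → t.concl = A →
      Valid base R Γ (.node (.disj A B) .plusI1 [t])
  | plusI2 {Γ t B} (A : GForm) : Valid base R Γ t → t.concl = B →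
      Valid base R Γ (.node (.disj A B) .plusI2 [t])
  | plusE {Γ t s₁ s₂ A B C} : Valid base R Γ t → t.concl = .disj A B →
      Valid base R (insert A Γ) s₁ → s₁.concl = C →
      Valid base R (insert B Γ) s₂ → s₂.concl = C →
      Valid base R Γ (.node C .plusE [t, s₁, s₂])
  | supI {Γ t A B} : Valid base R (insert A Γ) t → t.concl = B →
      Valid base R Γ (.node (.impl A B) .supI [t])
  | supE {Γ t s A B} : Valid base R Γ t → Valid base R Γ s →
      t.concl = .impl A B → s.concl = A →
      Valid base R Γ (.node B .supE [t, s])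
  | piI {Γ t A} (v : GVar) : Valid base R Γ t → t.concl = A →
      (∀ C ∈ Γ, v ∉ C.fvar) →
      Valid base R Γ (.node (.pi v A) .piI [t])
  | piEInd {Γ t A x u} : Valid base R Γ t → t.concl = .pi (.ind x) A →
      Valid base R Γ (.node (A.substInd x u) .piE [t])
  | piEXi {Γ t A α i τ} : Valid base R Γ t → t.concl = .pi (.xi α i) A →
      HasType base τ α → τ.noFunVar →
      Valid base R Γ (.node (A.substXi α i τ) .piE [t])
  | piEFh {Γ t A β x m τ} : Valid base R Γ t → t.concl = .pi (.fh β x m) A →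
      HasType base τ β → τ.noFunVar → (∀ γ j, GVar.xi γ j ∈ τ.fvar → x ∉ γ.fv) →
      Valid base R Γ (.node (A.substFH β x m τ) .piE [t])
  | piEFf {Γ t A β m τ} : Valid base R Γ t → t.concl = .pi (.ff β m) A →
      HasType base τ β → τ.noFunVar →
      Valid base R Γ (.node (A.substFF β m τ) .piE [t])
  | frakEIInd {Γ t A x u} : Valid base R Γ t → t.concl = A.substInd x u →
      Valid base R Γ (.node (.exi (.ind x) A) .frakEI [t])
  | frakEIXi {Γ t A α i τ} : Valid base R Γ t → t.concl = A.substXi α i τ →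
      HasType base τ α → τ.noFunVar →
      Valid base R Γ (.node (.exi (.xi α i) A) .frakEI [t])
  | frakEIFh {Γ t A β x m τ} : Valid base R Γ t → t.concl = A.substFH β x m τ →
      HasType base τ β → τ.noFunVar → (∀ γ j, GVar.xi γ j ∈ τ.fvar → x ∉ γ.fv) →
      Valid base R Γ (.node (.exi (.fh β x m) A) .frakEI [t])
  | frakEIFf {Γ t A β m τ} : Valid base R Γ t → t.concl = A.substFF β m τ →
      HasType base τ β → τ.noFunVar →
      Valid base R Γ (.node (.exi (.ff β m) A) .frakEI [t])
  | frakEE {Γ t s A B} (v : GVar) : Valid base R Γ t → t.concl = .exi v A →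
      Valid base R (insert A Γ) s → s.concl = B →
      (∀ C ∈ Γ, v ∉ C.fvar) → v ∉ B.fvar →
      Valid base R Γ (.node B .frakEE [t, s])
  | botGE {Γ t} (A : GForm) : Valid base R Γ t → t.concl = .botG →
      Valid base R Γ (.node A .botGE [t])

/-- `Deriv base R Γ A` : the formula `A` is derivable from assumptions `Γ` in the system
of grounding determined by `base` and `R`.  `Deriv base ∅ Γ A` is derivability in `GG`,
i.e. `Γ ⊢_GG A`. -/
def Deriv (base : ℕ → LFormula) (R : Set (List GForm × GForm)) (Γ : Set GForm)
    (A : GForm) : Prop :=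
  ∃ t : PTree, Valid base R Γ t ∧ t.concl = A

section Combinators

variable {base : ℕ → LFormula} {R : Set (List GForm × GForm)} {Γ : Set GForm}

theorem Deriv.assum {A : GForm} (h : A ∈ Γ) : Deriv base R Γ A :=
  ⟨_, .assum h, rfl⟩

theorem Deriv.timesE1 {A B : GForm} (h : Deriv base R Γ (.conj A B)) :
    Deriv base R Γ A := by
  obtain ⟨t, ht, hc⟩ := h
  exact ⟨_, .timesE1 ht hc, rfl⟩

theorem Deriv.timesE2 {A B : GForm} (h : Deriv base R Γ (.conj A B)) :
    Deriv base R Γ B := by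
  obtain ⟨t, ht, hc⟩ := h
  exact ⟨_, .timesE2 ht hc, rfl⟩

theorem Deriv.supI {A B : GForm} (h : Deriv base R (insert A Γ) B) :
    Deriv base R Γ (.impl A B) := by
  obtain ⟨t, ht, hc⟩ := h
  exact ⟨_, .supI ht hc, rfl⟩

theorem Deriv.supE {A B : GForm} (h1 : Deriv base R Γ (.impl A B))
    (h2 : Deriv base R Γ A) : Deriv base R Γ B := by
  obtain ⟨t, ht, hc⟩ := h1
  obtain ⟨s, hs, hsc⟩ := h2
  exact ⟨_, .supE ht hs hc hsc, rfl⟩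

theorem Deriv.piI {A : GForm} (v : GVar) (h : Deriv base R Γ A)
    (hv : ∀ C ∈ Γ, v ∉ C.fvar) : Deriv base R Γ (.pi v A) := by
  obtain ⟨t, ht, hc⟩ := h
  exact ⟨_, .piI v ht hc hv, rfl⟩

theorem Deriv.piEXi {A : GForm} {α : LFormula} {i : ℕ} {τ : GTerm}
    (h : Deriv base R Γ (.pi (.xi α i) A)) (h1 : HasType base τ α)
    (h2 : τ.noFunVar) : Deriv base R Γ (A.substXi α i τ) := by
  obtain ⟨t, ht, hc⟩ := h
  exact ⟨_, .piEXi ht hc h1 h2, rfl⟩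

theorem Deriv.eqRefl (T : GTerm) : Deriv base R Γ (.equiv T T) :=
  ⟨_, .eqRefl T, rfl⟩

theorem Deriv.eqTrans {T U W : GTerm} (h1 : Deriv base R Γ (.equiv T U))
    (h2 : Deriv base R Γ (.equiv U W)) : Deriv base R Γ (.equiv T W) := by
  obtain ⟨t, ht, hc⟩ := h1
  obtain ⟨s, hs, hsc⟩ := h2
  exact ⟨_, .eqTrans ht hs hc hsc, rfl⟩

theorem Deriv.eqPres {T U : GTerm} {α : LFormula}
    (h1 : Deriv base R Γ (.equiv T U)) (h2 : Deriv base R Γ (.gr U α)) :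
    Deriv base R Γ (.gr T α) := by
  obtain ⟨t, ht, hc⟩ := h1
  obtain ⟨s, hs, hsc⟩ := h2
  exact ⟨_, .eqPres ht hs hc hsc, rfl⟩

theorem Deriv.congOrE {T U V₁ V₂ W₁ W₂ : GTerm} (α β : LFormula) (i j : ℕ)
    (h : Deriv base R Γ (.equiv T U)) (h1 : Deriv base R Γ (.equiv V₁ V₂))
    (h2 : Deriv base R Γ (.equiv W₁ W₂)) :
    Deriv base R Γ (.equiv (.orE α β i j T V₁ W₁) (.orE α β i j U V₂ W₂)) := by
  obtain ⟨t, ht, hc⟩ := h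
  obtain ⟨s₁, hs₁, hc₁⟩ := h1
  obtain ⟨s₂, hs₂, hc₂⟩ := h2
  exact ⟨_, .congOrE α β i j ht hs₁ hs₂ hc hc₁ hc₂, rfl⟩

theorem Deriv.rOrL (α β : LFormula) (i j : ℕ) (T U Z : GTerm) :
    Deriv base R Γ (.equiv (.orE α β i j (.orI true β T) U Z) (U.substXi α i T)) :=
  ⟨_, .rOrL α β i j T U Z, rfl⟩

theorem Deriv.rOrR (α β : LFormula) (i j : ℕ) (T U Z : GTerm) :
    Deriv base R Γ (.equiv (.orE α β i j (.orI false α T) U Z) (Z.substXi β j T)) :=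
  ⟨_, .rOrR α β i j T U Z, rfl⟩

theorem Deriv.dOr {T : GTerm} {α β : LFormula} {i j : ℕ} {A : GForm}
    (h : Deriv base R Γ (.gr T (.or α β)))
    (h1 : Deriv base R
      (insert (.equiv T (.orI true β (.xi α i))) (insert (.gr (.xi α i) α) Γ)) A)
    (h2 : Deriv base R
      (insert (.equiv T (.orI false α (.xi β j))) (insert (.gr (.xi β j) β) Γ)) A)
    (hΓ : ∀ B ∈ Γ, GVar.xi α i ∉ B.fvar ∧ GVar.xi β j ∉ B.fvar)
    (hA1 : GVar.xi α i ∉ A.fvar) (hA2 : GVar.xi β j ∉ A.fvar)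
    (hT1 : GVar.xi α i ∉ T.fvar) (hT2 : GVar.xi β j ∉ T.fvar) :
    Deriv base R Γ A := by
  obtain ⟨t, ht, hc⟩ := h
  obtain ⟨s₁, hs₁, hc₁⟩ := h1
  obtain ⟨s₂, hs₂, hc₂⟩ := h2
  exact ⟨_, .dOr ht hc hs₁ hs₂ hc₁ hc₂ hΓ hA1 hA2 hT1 hT2, rfl⟩

theorem LFormula.ne_or_left (α β : LFormula) : α ≠ α.or β := by
  intro h
  have := congrArg sizeOf h
  simp only [LFormula.or.sizeOf_spec] at this
  omega

theorem LFormula.ne_or_right (α β : LFormula) : β ≠ α.or β := by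
  intro h
  have := congrArg sizeOf h
  simp only [LFormula.or.sizeOf_spec] at this
  omega

theorem GTerm.noFunVar_xi (α : LFormula) (i : ℕ) : (GTerm.xi α i).noFunVar := by
  intro v hv
  simp only [GTerm.fvar, Set.mem_union, Set.mem_singleton_iff, Set.mem_image] at hv
  rcases hv with h | ⟨x, _, h⟩ <;> subst h <;> simp [GVar.isFun]

end Combinators

/-- for all formulas α₁, α₂, β of L, the disjunction-elimination symbol is
provably well-defined in GG:
⊢_GG Π ξ^{α₁∨α₂} Π f^β_1 Π f^β_2 ( ((ξ^{α₁∨α₂} : α₁∨α₂ × Π ξ^{α₁}(ξ^{α₁} : α₁ ⊃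
f^β_1(ξ^{α₁}) : β)) × Π ξ^{α₂}(ξ^{α₂} : α₂ ⊃ f^β_2(ξ^{α₂}) : β)) ⊃
∨E ξ^{α₁} ξ^{α₂}(ξ^{α₁∨α₂}, f^β_1(ξ^{α₁}), f^β_2(ξ^{α₂})) : β ). -/
theorem orE_well_defined (base : ℕ → LFormula) (α₁ α₂ β : LFormula) :
    Deriv base ∅ ∅
      (.pi (.xi (α₁.or α₂) 0) (.pi (.ff β 1) (.pi (.ff β 2)
        (.impl
          (.conj
            (.conj (.gr (.xi (α₁.or α₂) 0) (α₁.or α₂))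
              (.pi (.xi α₁ 0)
                (.impl (.gr (.xi α₁ 0) α₁) (.gr (.ff β 1 (.xi α₁ 0)) β))))
            (.pi (.xi α₂ 1)
              (.impl (.gr (.xi α₂ 1) α₂) (.gr (.ff β 2 (.xi α₂ 1)) β))))
          (.gr (.orE α₁ α₂ 0 1 (.xi (α₁.or α₂) 0) (.ff β 1 (.xi α₁ 0)) (.ff β 2 (.xi α₂ 1)))
            β))))) := by
  have hne1 := LFormula.ne_or_left α₁ α₂
  have hne2 := LFormula.ne_or_right α₁ α₂
  -- abbreviations
  set ξ : GTerm := .xi (α₁.or α₂) 0 with hξ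
  set V : GTerm := .ff β 1 (.xi α₁ 0) with hV
  set W : GTerm := .ff β 2 (.xi α₂ 1) with hW
  set P1 : GForm := .pi (.xi α₁ 0) (.impl (.gr (.xi α₁ 0) α₁) (.gr V β)) with hP1
  set P2 : GForm := .pi (.xi α₂ 1) (.impl (.gr (.xi α₂ 1) α₂) (.gr W β)) with hP2
  set H : GForm := .conj (.conj (.gr ξ (α₁.or α₂)) P1) P2 with hH
  set A : GForm := .gr (.orE α₁ α₂ 0 1 ξ V W) β with hA
  have hVid : V.substXi α₁ 0 (.xi α₁ 0) = V := by simp [hV, GTerm.substXi]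
  have hWid : W.substXi α₂ 1 (.xi α₂ 1) = W := by simp [hW, GTerm.substXi]
  have main : Deriv base ∅ (insert H ∅) A := by
    have hmaj : Deriv base ∅ (insert H ∅) (.gr ξ (α₁.or α₂)) :=
      ((Deriv.assum (Set.mem_insert _ _)).timesE1).timesE1
    refine Deriv.dOr (i := 0) (j := 1) hmaj ?_ ?_ ?_ ?_ ?_ ?_ ?_
    · -- left branch
      set Γ₁ := insert (GForm.equiv ξ (.orI true α₂ (.xi α₁ 0)))
        (insert (GForm.gr (.xi α₁ 0) α₁) (insert H (∅ : Set GForm))) with hΓ₁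
      have hH' : H ∈ Γ₁ := by simp [hΓ₁]
      have hP1d : Deriv base ∅ Γ₁ P1 := ((Deriv.assum hH').timesE1).timesE2
      have hinst := hP1d.piEXi (τ := .xi α₁ 0) (HasType.xi α₁ 0)
        (GTerm.noFunVar_xi α₁ 0)
      rw [show (GForm.impl (.gr (.xi α₁ 0) α₁) (.gr V β)).substXi α₁ 0 (.xi α₁ 0)
          = .impl (.gr (.xi α₁ 0) α₁) (.gr V β) by
        simp [hV, GForm.substXi, GTerm.substXi]] at hinst
      have hVβ : Deriv base ∅ Γ₁ (.gr V β) :=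
        hinst.supE (Deriv.assum (by simp [hΓ₁]))
      have heq : Deriv base ∅ Γ₁ (.equiv ξ (.orI true α₂ (.xi α₁ 0))) :=
        Deriv.assum (Set.mem_insert _ _)
      have hcong := Deriv.congOrE (base := base) (R := ∅) (Γ := Γ₁) α₁ α₂ 0 1
        heq (Deriv.eqRefl V) (Deriv.eqRefl W)
      have hrw := Deriv.rOrL (base := base) (R := ∅) (Γ := Γ₁) α₁ α₂ 0 1
        (.xi α₁ 0) V W
      rw [hVid] at hrw
      exact (hcong.eqTrans hrw).eqPres hVβ
    · -- right branch
      set Γ₂ := insert (GForm.equiv ξ (.orI false α₁ (.xi α₂ 1)))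
        (insert (GForm.gr (.xi α₂ 1) α₂) (insert H (∅ : Set GForm))) with hΓ₂
      have hH' : H ∈ Γ₂ := by simp [hΓ₂]
      have hP2d : Deriv base ∅ Γ₂ P2 := (Deriv.assum hH').timesE2
      have hinst := hP2d.piEXi (τ := .xi α₂ 1) (HasType.xi α₂ 1)
        (GTerm.noFunVar_xi α₂ 1)
      rw [show (GForm.impl (.gr (.xi α₂ 1) α₂) (.gr W β)).substXi α₂ 1 (.xi α₂ 1)
          = .impl (.gr (.xi α₂ 1) α₂) (.gr W β) by
        simp [hW, GForm.substXi, GTerm.substXi]] at hinst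
      have hWβ : Deriv base ∅ Γ₂ (.gr W β) :=
        hinst.supE (Deriv.assum (by simp [hΓ₂]))
      have heq : Deriv base ∅ Γ₂ (.equiv ξ (.orI false α₁ (.xi α₂ 1))) :=
        Deriv.assum (Set.mem_insert _ _)
      have hcong := Deriv.congOrE (base := base) (R := ∅) (Γ := Γ₂) α₁ α₂ 0 1
        heq (Deriv.eqRefl V) (Deriv.eqRefl W)
      have hrw := Deriv.rOrR (base := base) (R := ∅) (Γ := Γ₂) α₁ α₂ 0 1
        (.xi α₂ 1) V W
      rw [hWid] at hrw
      exact (hcong.eqTrans hrw).eqPres hWβ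
    · -- side condition on Γ
      intro B hB
      simp only [Set.mem_insert_iff, Set.mem_empty_iff_false, or_false] at hB
      subst hB
      constructor <;>
        simp [hH, hP1, hP2, hV, hW, hξ, GForm.fvar, GTerm.fvar, hne1, hne2]
    · simp [hA, hV, hW, hξ, GForm.fvar, GTerm.fvar, hne1, hne2]
    · simp [hA, hV, hW, hξ, GForm.fvar, GTerm.fvar, hne1, hne2]
    · simp [hξ, GTerm.fvar, hne1]
    · simp [hξ, GTerm.fvar, hne2]
  exact (((main.supI).piI (.ff β 2) (by simp)).piI (.ff β 1) (by simp)).piI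
    (.xi (α₁.or α₂) 0) (by simp)

end

end Grounding
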